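/- arXiv:2405.01215 — 3 statements merged into one kernel-verified Lean document; each statement's English description precedes it below -/
import Mathlib

section
/- If x, y ∈ ℝ^N with var(x), var(y) > 0 satisfy x_n² + y_n² ≤ A² for all n, then min(var(x) − cov(x,y)²/var(y), var(y) − cov(x,y)²/var(x)) ≤ A²/2 (upper bound on the min-max CRB objective for the circular region). -/
open Finset

noncomputable def mean {N : ℕ} (x : Fin N → ℝ) : ℝ := (∑ n, x n) / N

noncomputable def svar {N : ℕ} (x : Fin N → ℝ) : ℝ :=
  (∑ n, (x n) ^ 2) / N - (mean x) ^ 2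

noncomputable def scov {N : ℕ} (x y : Fin N → ℝ) : ℝ :=
  (∑ n, x n * y n) / N - mean x * mean y

theorem min_max_crb_upper_bound_disk {N : ℕ} (hN : 1 ≤ N) (A : ℝ) (hA : 0 < A)
    (x y : Fin N → ℝ) (hx : 0 < svar x) (hy : 0 < svar y)
    (h : ∀ n, (x n) ^ 2 + (y n) ^ 2 ≤ A ^ 2) :
    min (svar x - (scov x y) ^ 2 / svar y) (svar y - (scov x y) ^ 2 / svar x)
      ≤ A ^ 2 / 2 := by
  have hNpos : (0:ℝ) < N := by exact_mod_cast hN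
  have hsum : svar x + svar y ≤ A ^ 2 := by
    have h1 : svar x + svar y ≤ (∑ n, (x n) ^ 2) / N + (∑ n, (y n) ^ 2) / N := by
      unfold svar
      nlinarith [sq_nonneg (mean x), sq_nonneg (mean y)]
    have h2 : (∑ n, (x n) ^ 2) + (∑ n, (y n) ^ 2) ≤ N * A ^ 2 := by
      calc (∑ n, (x n) ^ 2) + (∑ n, (y n) ^ 2) = ∑ n, ((x n) ^ 2 + (y n) ^ 2) := by
            rw [Finset.sum_add_distrib]
        _ ≤ ∑ _n : Fin N, A ^ 2 := Finset.sum_le_sum fun n _ => h n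
        _ = N * A ^ 2 := by simp [mul_comm]
    calc svar x + svar y ≤ (∑ n, (x n) ^ 2) / N + (∑ n, (y n) ^ 2) / N := h1
      _ = ((∑ n, (x n) ^ 2) + (∑ n, (y n) ^ 2)) / N := by ring
      _ ≤ (N * A ^ 2) / N := by exact div_le_div_of_nonneg_right h2 hNpos.le
      _ = A ^ 2 := by field_simp
  have p1 : 0 ≤ (scov x y) ^ 2 / svar y := div_nonneg (sq_nonneg _) hy.le
  have p2 : 0 ≤ (scov x y) ^ 2 / svar x := div_nonneg (sq_nonneg _) hx.le
  rcases le_total (svar x) (svar y) with hc | hc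
  · exact le_trans (min_le_left _ _) (by linarith)
  · exact le_trans (min_le_right _ _) (by linarith)
end

section
/- Let N be even and A ≥ (N−1)D with D > 0. The vector x* with x*_n = (n−1)D for n ≤ N/2 and x*_n = A − (N−n)D for n > N/2 satisfies var(x*) = (1/12)(3A² − 3(N−2)DA + (N−2)(N−1)D²). -/
open Finset

/-- The optimal 1D MA positions (0-indexed): the first ⌊N/2⌋ antennas are packed
at the left end with spacing `D`, the rest at the right end of `[0, A]`. -/
noncomputable def xstar (N : ℕ) (A D : ℝ) : Fin N → ℝ := fun n =>
  if (n : ℕ) < N / 2 then (n : ℕ) * D else A - ((N - 1 - (n : ℕ) : ℕ) : ℝ) * D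

lemma sum_id_real (m : ℕ) : ∑ i ∈ Finset.range m, (i : ℝ) = m * (m - 1) / 2 := by
  induction m with
  | zero => simp
  | succ k ih => rw [Finset.sum_range_succ, ih]; push_cast; ring

lemma sum_sq_real (m : ℕ) :
    ∑ i ∈ Finset.range m, (i : ℝ) ^ 2 = m * (m - 1) * (2 * m - 1) / 6 := by
  induction m with
  | zero => simp
  | succ k ih => rw [Finset.sum_range_succ, ih]; push_cast; ring

theorem var_xstar_even (N : ℕ) (hN : 2 ≤ N) (hNe : Even N) (A D : ℝ)
    (hD : 0 < D) (hA : ((N : ℝ) - 1) * D ≤ A) :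
    svar (xstar N A D) =
      (1 / 12) * (3 * A ^ 2 - 3 * ((N : ℝ) - 2) * D * A
        + ((N : ℝ) - 2) * ((N : ℝ) - 1) * D ^ 2) := by
  obtain ⟨m, rfl⟩ := hNe
  have hm : 1 ≤ m := by omega
  have hdiv : (m + m) / 2 = m := by omega
  have key : ∀ g : ℝ → ℝ,
      (∑ n : Fin (m + m), g (xstar (m + m) A D n)) =
        (∑ i ∈ Finset.range m, g ((i : ℝ) * D)) +
        (∑ i ∈ Finset.range m, g (A - (i : ℝ) * D)) := by
    intro g
    simp only [xstar]
    rw [Fin.sum_univ_eq_sum_range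
      (fun i : ℕ => g (if i < (m + m) / 2 then (i : ℝ) * D
        else A - ((m + m - 1 - i : ℕ) : ℝ) * D)), Finset.sum_range_add]
    congr 1
    · apply Finset.sum_congr rfl
      intro i hi
      rw [Finset.mem_range] at hi
      simp [hdiv, hi]
    · rw [← Finset.sum_range_reflect (fun i => g (A - (i : ℝ) * D)) m]
      apply Finset.sum_congr rfl
      intro i hi
      rw [Finset.mem_range] at hi
      have h1 : ¬ (m + i < (m + m) / 2) := by omega
      have h2 : m + m - 1 - (m + i) = m - 1 - i := by omega
      simp [h1, h2]
  have hsum := key id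
  have hsq := key (fun t => t ^ 2)
  simp only [id] at hsum
  unfold svar mean
  rw [hsum, hsq]
  have e1 : ∑ i ∈ Finset.range m, (i : ℝ) * D =
      (m * (m - 1) / 2) * D := by
    rw [← Finset.sum_mul, sum_id_real]
  have e2 : ∑ i ∈ Finset.range m, (A - (i : ℝ) * D) =
      m * A - (m * (m - 1) / 2) * D := by
    rw [Finset.sum_sub_distrib, ← Finset.sum_mul, sum_id_real, Finset.sum_const,
      Finset.card_range, nsmul_eq_mul]
  have e3 : ∑ i ∈ Finset.range m, ((i : ℝ) * D) ^ 2 =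
      (m * (m - 1) * (2 * m - 1) / 6) * D ^ 2 := by
    simp_rw [mul_pow, ← Finset.sum_mul, sum_sq_real]
  have e4 : ∑ i ∈ Finset.range m, (A - (i : ℝ) * D) ^ 2 =
      m * A ^ 2 - 2 * A * D * (m * (m - 1) / 2) +
        (m * (m - 1) * (2 * m - 1) / 6) * D ^ 2 := by
    have : ∀ i : ℕ, (A - (i : ℝ) * D) ^ 2 =
        A ^ 2 - 2 * A * D * (i : ℝ) + D ^ 2 * (i : ℝ) ^ 2 := by intro i; ring
    simp_rw [this, Finset.sum_add_distrib, Finset.sum_sub_distrib,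
      ← Finset.mul_sum, sum_id_real, sum_sq_real, Finset.sum_const,
      Finset.card_range, nsmul_eq_mul]
    ring
  rw [e1, e2, e3, e4]
  have hm0 : (0:ℝ) < (m:ℝ) := by exact_mod_cast hm
  have hc : ((m + m : ℕ) : ℝ) = 2 * m := by push_cast; ring
  rw [hc]
  field_simp
  ring
end

section
/- For any x ∈ ℝ^N with 0 ≤ x_1, x_N ≤ A, and x_n − x_{n−1} ≥ D for n = 2,...,N (with A ≥ (N−1)D, D > 0), one has var(x) ≤ var(x*), where x* is given by x*_n = (n−1)D for n ≤ ⌊N/2⌋ and x*_n = A − (N−n)D for n > ⌊N/2⌋. That is, x* is a global maximizer of the variance under the 1D movement and minimum-spacing constraints. -/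
open Finset

/-! Auxiliary machinery -/

noncomputable def indR (i j k : ℕ) : ℝ := if i ≤ k ∧ k < j then 1 else 0

lemma var_ident (f : ℕ → ℝ) (n : ℕ) :
    ∑ j ∈ range n, ∑ i ∈ range j, (f j - f i)^2
      = n * (∑ i ∈ range n, f i ^ 2) - (∑ i ∈ range n, f i)^2 := by
  induction n with
  | zero => simp
  | succ n ih =>
    rw [Finset.sum_range_succ, ih, Finset.sum_range_succ, Finset.sum_range_succ]
    have h1 : ∑ i ∈ range n, (f n - f i)^2
        = n * f n ^ 2 - 2 * f n * (∑ i ∈ range n, f i) + ∑ i ∈ range n, f i ^ 2 := by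
      rw [Finset.sum_congr rfl (fun i _ => by ring_nf :
        ∀ i ∈ range n, (f n - f i)^2 = f n ^2 - 2 * f n * f i + f i ^2)]
      rw [Finset.sum_add_distrib, Finset.sum_sub_distrib, ← Finset.mul_sum,
        Finset.sum_const, Finset.card_range]
      push_cast; ring
    rw [h1]
    push_cast
    ring

lemma swap_help (n m : ℕ) (w : ℕ → ℝ) (g : ℕ → ℕ → ℕ → ℝ) :
    ∑ k ∈ range m, w k * ∑ j ∈ range n, ∑ i ∈ range j, g i j k
      = ∑ j ∈ range n, ∑ i ∈ range j, ∑ k ∈ range m, w k * g i j k := by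
  simp only [Finset.mul_sum]
  rw [Finset.sum_comm]
  exact Finset.sum_congr rfl fun j _ => Finset.sum_comm

lemma gaussR (n : ℕ) : ∑ i ∈ range n, (i:ℝ) = n*(n-1)/2 := by
  induction n with
  | zero => simp
  | succ n ih => rw [Finset.sum_range_succ, ih]; push_cast; ring

lemma key_pt (N : ℕ) (f : ℕ → ℝ) (D : ℝ) {i j : ℕ} (hij : i < j) (hj : j < N) :
    f j - f i = ((j:ℝ) - i) * D
      + ∑ k ∈ range (N-1), (f (k+1) - f k - D) * indR i j k := by
  have hsub : Ico i j ⊆ range (N-1) := fun k hk => by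
    simp only [mem_Ico, mem_range] at *; omega
  have h1 : ∑ k ∈ range (N-1), (f (k+1) - f k - D) * indR i j k
      = ∑ k ∈ Ico i j, (f (k+1) - f k - D) := by
    rw [← Finset.sum_subset hsub]
    · exact Finset.sum_congr rfl fun k hk => by
        simp only [mem_Ico] at hk
        simp [indR, hk.1, hk.2]
    · intro k _ hk
      simp only [mem_Ico] at hk
      have : ¬ (i ≤ k ∧ k < j) := hk
      simp [indR, this]
  rw [h1, Finset.sum_sub_distrib, Finset.sum_Ico_eq_sub _ hij.le,
    Finset.sum_range_sub (fun k => f k), Finset.sum_range_sub (fun k => f k),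
    Finset.sum_const, Nat.card_Ico, nsmul_eq_mul]
  have : ((j - i : ℕ) : ℝ) = (j:ℝ) - i := by
    push_cast [Nat.cast_sub hij.le]; ring
  rw [this]; ring

lemma decomp (N : ℕ) (f : ℕ → ℝ) (D : ℝ) :
    ∑ j ∈ range N, ∑ i ∈ range j, (f j - f i)^2
    = (∑ j ∈ range N, ∑ i ∈ range j, ((j:ℝ)-(i:ℝ))^2) * D^2
    + 2*D* (∑ k ∈ range (N-1), (f (k+1) - f k - D) *
        (∑ j ∈ range N, ∑ i ∈ range j, ((j:ℝ)-(i:ℝ)) * indR i j k))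
    + ∑ k ∈ range (N-1), ∑ l ∈ range (N-1), ((f (k+1) - f k - D) * (f (l+1) - f l - D)) *
        (∑ j ∈ range N, ∑ i ∈ range j, indR i j k * indR i j l) := by
  set h : ℕ → ℝ := fun k => f (k+1) - f k - D with hh
  rw [swap_help]
  have hq : ∑ k ∈ range (N-1), ∑ l ∈ range (N-1), (h k * h l) *
        (∑ j ∈ range N, ∑ i ∈ range j, indR i j k * indR i j l)
      = ∑ j ∈ range N, ∑ i ∈ range j,
          (∑ k ∈ range (N-1), h k * indR i j k) * (∑ l ∈ range (N-1), h l * indR i j l) := by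
    have step1 : ∀ k, ∑ l ∈ range (N-1), (h k * h l) *
          (∑ j ∈ range N, ∑ i ∈ range j, indR i j k * indR i j l)
        = ∑ j ∈ range N, ∑ i ∈ range j, ∑ l ∈ range (N-1),
            (h k * h l) * (indR i j k * indR i j l) := fun k =>
      swap_help N (N-1) (fun l => h k * h l) (fun i j l => indR i j k * indR i j l)
    rw [Finset.sum_congr rfl (fun k _ => step1 k)]
    have step2 : ∑ k ∈ range (N-1), (1:ℝ) * (∑ j ∈ range N, ∑ i ∈ range j,
          ∑ l ∈ range (N-1), (h k * h l) * (indR i j k * indR i j l))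
        = ∑ j ∈ range N, ∑ i ∈ range j, ∑ k ∈ range (N-1), (1:ℝ) *
            ∑ l ∈ range (N-1), (h k * h l) * (indR i j k * indR i j l) :=
      swap_help N (N-1) (fun _ => (1:ℝ))
        (fun i j k => ∑ l ∈ range (N-1), (h k * h l) * (indR i j k * indR i j l))
    simp only [one_mul] at step2
    rw [step2]
    refine Finset.sum_congr rfl fun j _ => Finset.sum_congr rfl fun i _ => ?_
    rw [Finset.sum_mul_sum]
    exact Finset.sum_congr rfl fun k _ => Finset.sum_congr rfl fun l _ => by ring
  rw [hq]
  rw [show (∑ j ∈ range N, ∑ i ∈ range j, ((j:ℝ)-(i:ℝ))^2) * D^2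
      = ∑ j ∈ range N, ∑ i ∈ range j, ((j:ℝ)-(i:ℝ))^2 * D^2 by
    rw [Finset.sum_mul]; exact Finset.sum_congr rfl fun j _ => by rw [Finset.sum_mul]]
  rw [show 2*D*(∑ j ∈ range N, ∑ i ∈ range j, ∑ k ∈ range (N-1),
        h k * (((j:ℝ)-(i:ℝ)) * indR i j k))
      = ∑ j ∈ range N, ∑ i ∈ range j, 2*D*((j:ℝ)-(i:ℝ)) *
          ∑ k ∈ range (N-1), h k * indR i j k by
    rw [Finset.mul_sum]
    refine Finset.sum_congr rfl fun j _ => ?_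
    rw [Finset.mul_sum]
    refine Finset.sum_congr rfl fun i hi => ?_
    rw [Finset.mul_sum, Finset.mul_sum]
    exact Finset.sum_congr rfl fun k _ => by ring]
  rw [← Finset.sum_add_distrib, ← Finset.sum_add_distrib]
  refine Finset.sum_congr rfl fun j hj => ?_
  rw [← Finset.sum_add_distrib, ← Finset.sum_add_distrib]
  refine Finset.sum_congr rfl fun i hi => ?_
  simp only [mem_range] at hj hi
  have := key_pt N f D hi hj
  rw [show f j - f i = ((j:ℝ) - i) * D + ∑ k ∈ range (N-1), h k * indR i j k from this]
  ring

lemma ico_if_sum (N a : ℕ) (F : ℕ → ℝ) :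
    ∑ j ∈ range N, (if a < j then F j else 0) = ∑ j ∈ Ico (a+1) N, F j := by
  have hsub : Ico (a+1) N ⊆ range N := fun j hj => by
    simp only [mem_Ico, mem_range] at *; omega
  rw [← Finset.sum_subset hsub (fun j hjr hj => by
    simp only [mem_Ico] at hj
    simp only [mem_range] at hjr
    rw [if_neg (by omega)])]
  exact Finset.sum_congr rfl (fun j hj => by
    simp only [mem_Ico] at hj
    rw [if_pos (by omega)])

lemma c_closed (N k : ℕ) (hk : k < N - 1) :
    ∑ j ∈ range N, ∑ i ∈ range j, ((j:ℝ) - i) * indR i j k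
      = ((k:ℝ)+1) * ((N:ℝ)-1-k) * N / 2 := by
  have inner : ∀ j, j < N → ∑ i ∈ range j, ((j:ℝ) - i) * indR i j k
      = if k < j then ((k:ℝ)+1)*j - k*(k+1)/2 else 0 := by
    intro j _
    by_cases hkj : k < j
    · rw [if_pos hkj]
      have hsub : range (k+1) ⊆ range j := by
        intro i hi; simp only [mem_range] at *; omega
      have e1 : ∑ i ∈ range j, ((j:ℝ) - i) * indR i j k
          = ∑ i ∈ range (k+1), ((j:ℝ) - i) * indR i j k := by
        rw [← Finset.sum_subset hsub (fun i _ hi => by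
          simp only [mem_range] at hi
          simp [indR, show ¬(i ≤ k ∧ k < j) from fun h => hi (by omega)])]
      have e2 : ∑ i ∈ range (k+1), ((j:ℝ) - i) * indR i j k
          = ∑ i ∈ range (k+1), ((j:ℝ) - i) := by
        refine Finset.sum_congr rfl fun i hi => ?_
        simp only [mem_range] at hi
        simp [indR, show i ≤ k by omega, hkj]
      rw [e1, e2, Finset.sum_sub_distrib, Finset.sum_const, Finset.card_range,
        gaussR, nsmul_eq_mul]
      push_cast; ring
    · rw [if_neg hkj]
      refine Finset.sum_eq_zero fun i hi => ?_
      simp [indR, show ¬(i ≤ k ∧ k < j) from fun h => hkj h.2]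
  rw [Finset.sum_congr rfl (fun j hj => inner j (mem_range.mp hj)),
    ico_if_sum N k]
  rw [Finset.sum_sub_distrib, Finset.sum_const, Nat.card_Ico, ← Finset.mul_sum,
    Finset.sum_Ico_eq_sub _ (by omega : k+1 ≤ N), gaussR, gaussR, nsmul_eq_mul]
  have : ((N - (k+1) : ℕ) : ℝ) = (N:ℝ) - (k+1) := by
    push_cast [Nat.cast_sub (by omega : k+1 ≤ N)]; ring
  rw [this]
  push_cast
  ring

lemma b_closed_le (N k l : ℕ) (hl : l < N - 1) (hkl : k ≤ l) :
    ∑ j ∈ range N, ∑ i ∈ range j, indR i j k * indR i j l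
      = ((k:ℝ)+1) * ((N:ℝ)-1-l) := by
  have inner : ∀ j, ∑ i ∈ range j, indR i j k * indR i j l
      = if l < j then ((k:ℝ)+1) else 0 := by
    intro j
    by_cases hlj : l < j
    · rw [if_pos hlj]
      have hsub : range (k+1) ⊆ range j := by
        intro i hi; simp only [mem_range] at *; omega
      have e1 : ∑ i ∈ range j, indR i j k * indR i j l
          = ∑ i ∈ range (k+1), indR i j k * indR i j l := by
        rw [← Finset.sum_subset hsub (fun i _ hi => by
          simp only [mem_range] at hi
          simp [indR, show ¬(i ≤ k ∧ k < j) from fun h => hi (by omega)])]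
      have e2 : ∑ i ∈ range (k+1), indR i j k * indR i j l
          = ∑ _i ∈ range (k+1), (1:ℝ) := by
        refine Finset.sum_congr rfl fun i hi => ?_
        simp only [mem_range] at hi
        simp [indR, show i ≤ k by omega, show i ≤ l by omega, hlj, show k < j by omega]
      rw [e1, e2]; simp
    · rw [if_neg hlj]
      refine Finset.sum_eq_zero fun i hi => ?_
      simp [indR, show ¬(i ≤ l ∧ l < j) from fun h => hlj h.2]
  rw [Finset.sum_congr rfl (fun j _ => inner j), ico_if_sum N l]
  rw [Finset.sum_const, Nat.card_Ico, nsmul_eq_mul]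
  have : ((N - (l+1) : ℕ) : ℝ) = (N:ℝ) - (l+1) := by
    push_cast [Nat.cast_sub (by omega : l+1 ≤ N)]; ring
  rw [this]; ring

lemma quad_le (N m : ℕ) :
    (m:ℝ) * ((N:ℝ) - m) ≤ ((N/2 : ℕ):ℝ) * ((N:ℝ) - ((N/2:ℕ):ℝ)) := by
  rcases le_or_gt m (N/2) with h | h
  · have e1 : (0:ℝ) ≤ ((N/2:ℕ):ℝ) - m := by
      have := Nat.cast_le (α := ℝ).mpr h; linarith
    have e2 : (0:ℝ) ≤ (N:ℝ) - ((N/2:ℕ):ℝ) - m := by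
      have h3 : m + N/2 ≤ N := by omega
      have := Nat.cast_le (α := ℝ).mpr h3; push_cast at this; linarith
    nlinarith [mul_nonneg e1 e2]
  · have e1 : (0:ℝ) ≤ (m:ℝ) - ((N/2:ℕ):ℝ) := by
      have := Nat.cast_le (α := ℝ).mpr h.le; linarith
    have e2 : (0:ℝ) ≤ (m:ℝ) + ((N/2:ℕ):ℝ) - N := by
      have h3 : N ≤ m + N/2 := by omega
      have := Nat.cast_le (α := ℝ).mpr h3; push_cast at this; linarith
    nlinarith [mul_nonneg e1 e2]

set_option maxHeartbeats 1600000 in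
theorem xstar_maximizes_variance (N : ℕ) (hN : 2 ≤ N) (A D : ℝ)
    (hD : 0 < D) (hA : ((N : ℝ) - 1) * D ≤ A)
    (x : Fin N → ℝ)
    (h0 : 0 ≤ x ⟨0, by omega⟩)
    (hAx : x ⟨N - 1, by omega⟩ ≤ A)
    (hsp : ∀ n : Fin N, ∀ h : (n : ℕ) + 1 < N, D ≤ x ⟨(n : ℕ) + 1, h⟩ - x n) :
    svar x ≤ svar (xstar N A D) := by
  set q : ℕ := N / 2 with hqdef
  have hq1 : 1 ≤ q := by omega
  have hqN : q ≤ N - 1 := by omega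
  set f : ℕ → ℝ := fun n => if h : n < N then x ⟨n, h⟩ else 0 with hfdef
  set g : ℕ → ℝ := fun n =>
    if n < q then (n:ℝ) * D else A - ((N - 1 - n : ℕ) : ℝ) * D with hgdef
  set G : ℝ := A - ((N:ℝ) - 1) * D with hGdef
  have hG : 0 ≤ G := by simp [hGdef]; linarith
  -- svar in terms of range sums
  have svar_range : ∀ y : Fin N → ℝ, ∀ F : ℕ → ℝ, (∀ i : Fin N, F i = y i) →
      svar y = ((N:ℝ) * (∑ i ∈ range N, F i ^ 2) - (∑ i ∈ range N, F i)^2) / (N:ℝ)^2 := by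
    intro y F hF
    have e1 : ∑ n : Fin N, y n = ∑ n ∈ range N, F n := by
      rw [← Fin.sum_univ_eq_sum_range]
      exact Finset.sum_congr rfl fun i _ => (hF i).symm
    have e2 : ∑ n : Fin N, y n ^ 2 = ∑ n ∈ range N, F n ^ 2 := by
      rw [← Fin.sum_univ_eq_sum_range (fun n => F n ^ 2)]
      exact Finset.sum_congr rfl fun i _ => by rw [hF i]
    unfold svar mean
    rw [e1, e2]
    have hNne : (N:ℝ) ≠ 0 := by positivity
    field_simp
  have sfx : svar x = (∑ j ∈ range N, ∑ i ∈ range j, (f j - f i)^2) / (N:ℝ)^2 := by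
    rw [var_ident, svar_range x f (fun i => by simp [hfdef, i.isLt])]
  have sgx : svar (xstar N A D)
      = (∑ j ∈ range N, ∑ i ∈ range j, (g j - g i)^2) / (N:ℝ)^2 := by
    rw [var_ident, svar_range (xstar N A D) g (fun i => rfl)]
  rw [sfx, sgx]
  have hN2 : (0:ℝ) < (N:ℝ)^2 := by positivity
  apply div_le_div_of_nonneg_right ?_ hN2.le
  rw [decomp N f D, decomp N g D]
  set C : ℕ → ℝ := fun k => ∑ j ∈ range N, ∑ i ∈ range j, ((j:ℝ)-(i:ℝ)) * indR i j k
    with hCdef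
  set B : ℕ → ℕ → ℝ := fun k l => ∑ j ∈ range N, ∑ i ∈ range j, indR i j k * indR i j l
    with hBdef
  set h : ℕ → ℝ := fun k => f (k+1) - f k - D with hhdef
  -- the star gap sequence
  have hstar : ∀ k, k < N - 1 → g (k+1) - g k - D = if k = q - 1 then G else 0 := by
    intro k hk
    rcases lt_trichotomy (k+1) q with h1 | h1 | h1
    · rw [if_neg (by omega)]
      have e1 : g (k+1) = ((k:ℝ)+1) * D := by
        rw [hgdef]; simp only []
        rw [if_pos (by omega : k+1 < q)]; push_cast; ring
      have e2 : g k = (k:ℝ) * D := by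
        rw [hgdef]; simp only []
        rw [if_pos (by omega : k < q)]
      rw [e1, e2]; ring
    · rw [if_pos (by omega)]
      have e1 : g (k+1) = A - ((N:ℝ) - 1 - ((k:ℝ)+1)) * D := by
        rw [hgdef]; simp only []
        rw [if_neg (by omega : ¬ (k+1 < q))]
        congr 1
        rw [Nat.cast_sub (by omega : k+1 ≤ N - 1), Nat.cast_sub (by omega : 1 ≤ N)]
        push_cast; ring
      have e2 : g k = (k:ℝ) * D := by
        rw [hgdef]; simp only []
        rw [if_pos (by omega : k < q)]
      have hkq : ((k:ℝ)+1) = (q:ℝ) := by exact_mod_cast congrArg (Nat.cast : ℕ → ℝ) h1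
      have hq2 : 2 * q ≤ N := by omega
      have hq2R : 2 * (q:ℝ) ≤ (N:ℝ) := by exact_mod_cast hq2
      rw [e1, e2, hGdef]
      have : (k:ℝ) = (q:ℝ) - 1 := by linarith
      rw [this]; ring
    · rw [if_neg (by omega)]
      have e1 : g (k+1) = A - ((N:ℝ) - 1 - ((k:ℝ)+1)) * D := by
        rw [hgdef]; simp only []
        rw [if_neg (by omega : ¬ (k+1 < q))]
        congr 1
        rw [Nat.cast_sub (by omega : k+1 ≤ N - 1), Nat.cast_sub (by omega : 1 ≤ N)]
        push_cast; ring
      have e2 : g k = A - ((N:ℝ) - 1 - (k:ℝ)) * D := by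
        rw [hgdef]; simp only []
        rw [if_neg (by omega : ¬ (k < q))]
        congr 1
        rw [Nat.cast_sub (by omega : k ≤ N - 1), Nat.cast_sub (by omega : 1 ≤ N)]
        push_cast; ring
      rw [e1, e2]; ring
  -- helper to collapse sums against the star gap indicator
  have hmem : q - 1 ∈ range (N-1) := mem_range.mpr (by omega)
  have pick : ∀ F : ℕ → ℝ,
      ∑ l ∈ range (N-1), (if l = q - 1 then G else 0) * F l = G * F (q-1) := by
    intro F
    simp only [ite_mul, zero_mul]
    rw [Finset.sum_ite_eq' (range (N-1)) (q-1) (fun k => G * F k), if_pos hmem]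
  have gC : ∑ k ∈ range (N-1), (g (k+1) - g k - D) * C k = G * C (q-1) := by
    rw [Finset.sum_congr rfl (fun k hk => by rw [hstar k (mem_range.mp hk)])]
    exact pick C
  have gB : ∑ k ∈ range (N-1), ∑ l ∈ range (N-1),
        ((g (k+1) - g k - D) * (g (l+1) - g l - D)) * B k l
      = G * (G * B (q-1) (q-1)) := by
    have e1 : ∀ k, k < N - 1 → ∑ l ∈ range (N-1),
          ((g (k+1) - g k - D) * (g (l+1) - g l - D)) * B k l
        = (if k = q - 1 then G else 0) * (G * B k (q-1)) := by
      intro k hk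
      have e2 : ∑ l ∈ range (N-1), ((g (k+1) - g k - D) * (g (l+1) - g l - D)) * B k l
          = ∑ l ∈ range (N-1), (if l = q - 1 then G else 0) *
              ((if k = q - 1 then G else 0) * B k l) := by
        refine Finset.sum_congr rfl fun l hl => ?_
        rw [hstar l (mem_range.mp hl), hstar k hk]
        ring
      rw [e2, pick]
      ring
    rw [Finset.sum_congr rfl (fun k hk => e1 k (mem_range.mp hk))]
    exact pick (fun k => G * B k (q-1))
  -- closed-form values at the star index
  have hcast1 : ((q-1:ℕ):ℝ) + 1 = (q:ℝ) := by
    rw [Nat.cast_sub hq1]; ring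
  have hcast2 : (N:ℝ) - 1 - ((q-1:ℕ):ℝ) = (N:ℝ) - (q:ℝ) := by
    rw [Nat.cast_sub hq1]; push_cast; ring
  have Cq : C (q-1) = (q:ℝ) * ((N:ℝ) - q) * N / 2 := by
    rw [hCdef]; simp only []
    rw [c_closed N (q-1) (by omega), hcast1, hcast2]
  have Bq : B (q-1) (q-1) = (q:ℝ) * ((N:ℝ) - q) := by
    rw [hBdef]; simp only []
    rw [b_closed_le N (q-1) (q-1) (by omega) le_rfl, hcast1, hcast2]
  -- properties of the gap sequence of x
  have hh0 : ∀ k ∈ range (N-1), 0 ≤ h k := by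
    intro k hk
    have hk' := mem_range.mp hk
    have hsp' := hsp ⟨k, by omega⟩ (by simpa using (by omega : k + 1 < N))
    rw [hhdef]; simp only []
    rw [hfdef]; simp only []
    rw [dif_pos (by omega : k + 1 < N), dif_pos (by omega : k < N)]
    simp only at hsp'
    linarith [hsp']
  have hsumh0 : 0 ≤ ∑ k ∈ range (N-1), h k := Finset.sum_nonneg hh0
  have hsumh : ∑ k ∈ range (N-1), h k ≤ G := by
    have tel : ∑ k ∈ range (N-1), h k = f (N-1) - f 0 - ((N-1:ℕ):ℝ) * D := by
      rw [hhdef]; simp only []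
      rw [Finset.sum_sub_distrib, Finset.sum_range_sub (fun k => f k),
        Finset.sum_const, Finset.card_range, nsmul_eq_mul]
    have e0 : f 0 = x ⟨0, by omega⟩ := by
      rw [hfdef]; simp only []; rw [dif_pos (by omega : 0 < N)]
    have eN : f (N-1) = x ⟨N-1, by omega⟩ := by
      rw [hfdef]; simp only []; rw [dif_pos (by omega : N - 1 < N)]
    have ec : ((N-1:ℕ):ℝ) = (N:ℝ) - 1 := by
      rw [Nat.cast_sub (by omega : 1 ≤ N)]; norm_num
    rw [tel, e0, eN, ec, hGdef]
    linarith [h0, hAx]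
  -- bounds on C and B
  have hqleN : (q:ℝ) ≤ (N:ℝ) := by exact_mod_cast (by omega : q ≤ N)
  have cstar0 : (0:ℝ) ≤ (q:ℝ) * ((N:ℝ) - q) * N / 2 := by
    have : (0:ℝ) ≤ (N:ℝ) - q := by linarith
    positivity
  have bstar0 : (0:ℝ) ≤ (q:ℝ) * ((N:ℝ) - q) := by
    have : (0:ℝ) ≤ (N:ℝ) - q := by linarith
    positivity
  have Cle : ∀ k ∈ range (N-1), C k ≤ (q:ℝ) * ((N:ℝ) - q) * N / 2 := by
    intro k hk
    have hk' := mem_range.mp hk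
    rw [hCdef]; simp only []
    rw [c_closed N k hk']
    have hql := quad_le N (k+1)
    rw [← hqdef] at hql
    push_cast at hql
    have hN0 : (0:ℝ) ≤ (N:ℝ) := Nat.cast_nonneg N
    nlinarith [mul_le_mul_of_nonneg_right hql (by positivity : (0:ℝ) ≤ (N:ℝ)/2)]
  have blem : ∀ k l : ℕ, k ≤ l → l < N - 1 →
      ∑ j ∈ range N, ∑ i ∈ range j, indR i j k * indR i j l
        ≤ (q:ℝ) * ((N:ℝ) - q) := by
    intro k l hkl hl
    rw [b_closed_le N k l hl hkl]
    have hql := quad_le N (l+1)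
    rw [← hqdef] at hql
    push_cast at hql
    have c1 : (k:ℝ) + 1 ≤ (l:ℝ) + 1 := by
      have : (k:ℝ) ≤ (l:ℝ) := by exact_mod_cast hkl
      linarith
    have c2 : (0:ℝ) ≤ (N:ℝ) - 1 - l := by
      have : (l:ℝ) + 2 ≤ (N:ℝ) := by exact_mod_cast (by omega : l + 2 ≤ N)
      linarith
    nlinarith [mul_le_mul_of_nonneg_right c1 c2]
  have Ble : ∀ k ∈ range (N-1), ∀ l ∈ range (N-1), B k l ≤ (q:ℝ) * ((N:ℝ) - q) := by
    intro k hk l hl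
    rcases le_total k l with hkl | hkl
    · rw [hBdef]; simp only []
      exact blem k l hkl (mem_range.mp hl)
    · have hsym : B k l = B l k := by
        rw [hBdef]; simp only []
        exact Finset.sum_congr rfl fun j _ => Finset.sum_congr rfl fun i _ =>
          mul_comm _ _
      rw [hsym, hBdef]; simp only []
      exact blem l k hkl (mem_range.mp hk)
  -- bound the cross term
  have CSf_le : ∑ k ∈ range (N-1), h k * C k ≤ G * ((q:ℝ) * ((N:ℝ) - q) * N / 2) := by
    calc ∑ k ∈ range (N-1), h k * C k
        ≤ ∑ k ∈ range (N-1), h k * ((q:ℝ) * ((N:ℝ) - q) * N / 2) :=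
          Finset.sum_le_sum fun k hk =>
            mul_le_mul_of_nonneg_left (Cle k hk) (hh0 k hk)
      _ = (∑ k ∈ range (N-1), h k) * ((q:ℝ) * ((N:ℝ) - q) * N / 2) := by
          rw [Finset.sum_mul]
      _ ≤ G * ((q:ℝ) * ((N:ℝ) - q) * N / 2) :=
          mul_le_mul_of_nonneg_right hsumh cstar0
  -- bound the quadratic term
  have BSf_le : ∑ k ∈ range (N-1), ∑ l ∈ range (N-1), (h k * h l) * B k l
      ≤ G * (G * ((q:ℝ) * ((N:ℝ) - q))) := by
    have step1 : ∑ k ∈ range (N-1), ∑ l ∈ range (N-1), (h k * h l) * B k l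
        ≤ ∑ k ∈ range (N-1), ∑ l ∈ range (N-1), (h k * h l) * ((q:ℝ) * ((N:ℝ) - q)) :=
      Finset.sum_le_sum fun k hk => Finset.sum_le_sum fun l hl =>
        mul_le_mul_of_nonneg_left (Ble k hk l hl)
          (mul_nonneg (hh0 k hk) (hh0 l hl))
    have step2 : ∑ k ∈ range (N-1), ∑ l ∈ range (N-1), (h k * h l) * ((q:ℝ) * ((N:ℝ) - q))
        = (∑ k ∈ range (N-1), h k) * ((∑ l ∈ range (N-1), h l) * ((q:ℝ) * ((N:ℝ) - q))) := by
      rw [Finset.sum_mul]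
      refine Finset.sum_congr rfl fun k _ => ?_
      rw [Finset.sum_mul, Finset.mul_sum]
      exact Finset.sum_congr rfl fun l _ => by ring
    have step3 : (∑ k ∈ range (N-1), h k) * ((∑ l ∈ range (N-1), h l) * ((q:ℝ) * ((N:ℝ) - q)))
        ≤ G * (G * ((q:ℝ) * ((N:ℝ) - q))) := by
      have h1 : (∑ l ∈ range (N-1), h l) * ((q:ℝ) * ((N:ℝ) - q))
          ≤ G * ((q:ℝ) * ((N:ℝ) - q)) := mul_le_mul_of_nonneg_right hsumh bstar0
      have h2 : 0 ≤ (∑ l ∈ range (N-1), h l) * ((q:ℝ) * ((N:ℝ) - q)) :=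
        mul_nonneg hsumh0 bstar0
      exact mul_le_mul hsumh h1 h2 hG
    linarith [step1, step2.le, step2.ge, step3]
  -- assemble
  rw [gC, gB, Cq, Bq]
  have crossle : 2 * D * (∑ k ∈ range (N-1), h k * C k)
      ≤ 2 * D * (G * ((q:ℝ) * ((N:ℝ) - q) * N / 2)) :=
    mul_le_mul_of_nonneg_left CSf_le (by linarith)
  have hfix : ∀ k, f (k+1) - f k - D = h k := fun k => by rw [hhdef]
  simp only [hfix]
  have eC : (∑ k ∈ range (N-1),
        h k * ∑ j ∈ range N, ∑ i ∈ range j, ((j:ℝ)-(i:ℝ)) * indR i j k)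
      = ∑ k ∈ range (N-1), h k * C k := rfl
  have eB : (∑ k ∈ range (N-1), ∑ l ∈ range (N-1),
        h k * h l * ∑ j ∈ range N, ∑ i ∈ range j, indR i j k * indR i j l)
      = ∑ k ∈ range (N-1), ∑ l ∈ range (N-1), (h k * h l) * B k l := rfl
  rw [eC, eB]
  exact add_le_add (add_le_add le_rfl crossle) BSf_le
end
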